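/- Let (C_0, d_0), (C_1, d_1), (C_2, d_2) be chain complexes over 𝔽₂ with chain maps f_κ : C_κ → C_{κ+1} (indices mod 3), maps H_κ : C_{κ+1} → C_κ with [d, H_κ] = f_{κ-1} ∘ f_{κ+1}, and maps P_κ with [d, P_κ] = Id + H_κ ∘ f_κ + f_{κ-1} ∘ H_{κ-1}. If z ∈ C_κ is closed (d_κ z = 0) and f_κ(z) = d_{κ+1}(x) for some x ∈ C_{κ+1}, then y := H_{κ-1}(z) + f_{κ+1}(x) is closed in C_{κ-1} and f_{κ-1}(y) + z lies in the image of d_κ. -/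
import Mathlib

private lemma char2_add {M : Type*} [AddCommGroup M] [Module (ZMod 2) M] (a : M) :
    a + a = 0 := by
  have h : (2 : ZMod 2) • a = 0 := by rw [show (2 : ZMod 2) = 0 by decide, zero_smul]
  rwa [two_smul] at h

private lemma key_step {A B C : Type*}
    [AddCommGroup A] [AddCommGroup B] [AddCommGroup C]
    [Module (ZMod 2) A] [Module (ZMod 2) B] [Module (ZMod 2) C]
    (dA : A →ₗ[ZMod 2] A) (dB : B →ₗ[ZMod 2] B) (dC : C →ₗ[ZMod 2] C)
    (f : A →ₗ[ZMod 2] B) (g : B →ₗ[ZMod 2] C) (h : C →ₗ[ZMod 2] A)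
    (H : A →ₗ[ZMod 2] C) (H0 : B →ₗ[ZMod 2] A) (P : A →ₗ[ZMod 2] A)
    (hg : dC ∘ₗ g = g ∘ₗ dB)
    (hH0 : H0 ∘ₗ dB + dA ∘ₗ H0 = h ∘ₗ g)
    (hH : H ∘ₗ dA + dC ∘ₗ H = g ∘ₗ f)
    (hP : P ∘ₗ dA + dA ∘ₗ P = LinearMap.id + H0 ∘ₗ f + h ∘ₗ H)
    (z : A) (x : B) (hz : dA z = 0) (hx : f z = dB x) :
    dC (H z + g x) = 0 ∧ h (H z + g x) + z ∈ LinearMap.range dA := by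
  have e1 := LinearMap.congr_fun hH z
  have e2 := LinearMap.congr_fun hP z
  have e3 := LinearMap.congr_fun hH0 x
  have e4 := LinearMap.congr_fun hg x
  simp only [LinearMap.add_apply, LinearMap.comp_apply, LinearMap.id_apply, hz,
    map_zero, zero_add, add_zero] at e1 e2 e3 e4
  constructor
  · rw [map_add, e1, e4, ← hx, char2_add]
  · refine ⟨P z + H0 x, ?_⟩
    have e3' : dA (H0 x) = h (g x) - H0 (dB x) := by
      rw [← e3]; abel
    rw [map_add, e2, e3', hx, map_add]
    abel

/-- The key computational step in the proof of the exact-triangle criterion: if `z`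
is a cycle whose image `f_κ(z)` is the boundary of `x`, then
`y = H_{κ-1}(z) + f_{κ+1}(x)` is a cycle and `f_{κ-1}(y) + z` is a boundary.
Stated for all three values of `κ ∈ ℤ/3`. -/
theorem stmt_3
    (C₀ C₁ C₂ : Type*)
    [AddCommGroup C₀] [AddCommGroup C₁] [AddCommGroup C₂]
    [Module (ZMod 2) C₀] [Module (ZMod 2) C₁] [Module (ZMod 2) C₂]
    (d₀ : C₀ →ₗ[ZMod 2] C₀) (d₁ : C₁ →ₗ[ZMod 2] C₁) (d₂ : C₂ →ₗ[ZMod 2] C₂)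
    (hd₀ : d₀ ∘ₗ d₀ = 0) (hd₁ : d₁ ∘ₗ d₁ = 0) (hd₂ : d₂ ∘ₗ d₂ = 0)
    (f₀ : C₀ →ₗ[ZMod 2] C₁) (f₁ : C₁ →ₗ[ZMod 2] C₂) (f₂ : C₂ →ₗ[ZMod 2] C₀)
    (hf₀ : d₁ ∘ₗ f₀ = f₀ ∘ₗ d₀) (hf₁ : d₂ ∘ₗ f₁ = f₁ ∘ₗ d₁) (hf₂ : d₀ ∘ₗ f₂ = f₂ ∘ₗ d₂)
    (H₀ : C₁ →ₗ[ZMod 2] C₀) (H₁ : C₂ →ₗ[ZMod 2] C₁) (H₂ : C₀ →ₗ[ZMod 2] C₂)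
    (P₀ : C₀ →ₗ[ZMod 2] C₀) (P₁ : C₁ →ₗ[ZMod 2] C₁) (P₂ : C₂ →ₗ[ZMod 2] C₂)
    (hH₀ : H₀ ∘ₗ d₁ + d₀ ∘ₗ H₀ = f₂ ∘ₗ f₁)
    (hH₁ : H₁ ∘ₗ d₂ + d₁ ∘ₗ H₁ = f₀ ∘ₗ f₂)
    (hH₂ : H₂ ∘ₗ d₀ + d₂ ∘ₗ H₂ = f₁ ∘ₗ f₀)
    (hP₀ : P₀ ∘ₗ d₀ + d₀ ∘ₗ P₀ = LinearMap.id + H₀ ∘ₗ f₀ + f₂ ∘ₗ H₂)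
    (hP₁ : P₁ ∘ₗ d₁ + d₁ ∘ₗ P₁ = LinearMap.id + H₁ ∘ₗ f₁ + f₀ ∘ₗ H₀)
    (hP₂ : P₂ ∘ₗ d₂ + d₂ ∘ₗ P₂ = LinearMap.id + H₂ ∘ₗ f₂ + f₁ ∘ₗ H₁) :
    (∀ (z : C₀) (x : C₁), d₀ z = 0 → f₀ z = d₁ x →
      d₂ (H₂ z + f₁ x) = 0 ∧ f₂ (H₂ z + f₁ x) + z ∈ LinearMap.range d₀) ∧
    (∀ (z : C₁) (x : C₂), d₁ z = 0 → f₁ z = d₂ x →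
      d₀ (H₀ z + f₂ x) = 0 ∧ f₀ (H₀ z + f₂ x) + z ∈ LinearMap.range d₁) ∧
    (∀ (z : C₂) (x : C₀), d₂ z = 0 → f₂ z = d₀ x →
      d₁ (H₁ z + f₀ x) = 0 ∧ f₁ (H₁ z + f₀ x) + z ∈ LinearMap.range d₂) := by
  exact ⟨fun z x => key_step d₀ d₁ d₂ f₀ f₁ f₂ H₂ H₀ P₀ hf₁ hH₀ hH₂ hP₀ z x,
         fun z x => key_step d₁ d₂ d₀ f₁ f₂ f₀ H₀ H₁ P₁ hf₂ hH₁ hH₀ hP₁ z x,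
         fun z x => key_step d₂ d₀ d₁ f₂ f₀ f₁ H₁ H₂ P₂ hf₀ hH₂ hH₁ hP₂ z x⟩
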